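/- Let (f_n(q))_{n≥0} be a sequence of Laurent polynomials with integer coefficients such that the sequence ((q)_n·f_n(q))_{n≥0} is nicely bounded, where (q)_n = ∏_{j=1}^n (1 − q^j). Then the sequence (f_n(q))_{n≥0} is itself nicely bounded. -/

import Mathlib

/-- A sequence of integer Laurent polynomials is *nicely bounded* if the support of
`f n` lies in `[−C'·n², C'·n²]` and the ℓ¹-norm of `f n` is at most `C^n`, for all `n ≥ 1`. -/
def NicelyBounded (f : ℕ → LaurentPolynomial ℤ) : Prop :=
  ∃ C C' : ℝ, 0 < C ∧ 0 < C' ∧ ∀ n : ℕ, 1 ≤ n →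
    (∀ j ∈ (f n).coeff.support, |(j : ℝ)| ≤ C' * (n : ℝ) ^ 2) ∧
    (∑ j ∈ (f n).coeff.support, |((f n).coeff j : ℝ)|) ≤ C ^ n

/-- The Laurent polynomial `(q)_k = ∏_{j=1}^k (1 − q^j)`. -/
noncomputable def qPochhammer' (k : ℕ) : LaurentPolynomial ℤ :=
  ∏ j ∈ Finset.range k, (1 - LaurentPolynomial.T (j + 1))

/-!
Write `g = (q)_n f`. The lowest and highest coefficients of `f` survive in `g`, so the
support bound passes from `g` to `f`; say both supports lie in `[-N, N]`. For the coefficients,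
truncate `1/(q)_n = ∏_{j ≤ n} ∑_m q^{jm}` to `P = ∏_{j ≤ n} ∑_{m ≤ 2N} q^{jm}`. Then
`(q)_n P ≡ 1 mod q^{2N+1}`, so `f` and `g P` agree on `[-N, N]`, whence
`|f_d| ≤ ‖g‖₁ max_{b ≤ 2N} P_b`. As `P` has nonnegative coefficients,
`P_b ≤ x^{-b} P(x) ≤ x^{-2N} ∏_{j ≤ n} (1 - x^j)⁻¹` for `0 < x < 1`; at `x = e^{-1/n}` this is
at most `e^{2N/n} (2e)^n`, exponential in `n` since `N = O(n²)`.
-/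

open Polynomial LaurentPolynomial Finset Real

theorem dvd_prod_one_sub_sub_one {R ι : Type*} [CommRing R] {s : Finset ι} {a : R} {b : ι → R}
    (h : ∀ i ∈ s, a ∣ b i) : a ∣ ∏ i ∈ s, (1 - b i) - 1 :=
  prod_induction _ (fun x => a ∣ x - 1)
    (fun x y hx hy => by
      rw [show x * y - 1 = (x - 1) * y + (y - 1) by ring]
      exact dvd_add (dvd_mul_of_dvd_left hx y) hy)
    (by simp) (fun i hi => by simpa using (h i hi).neg_right)

theorem coeff_mul_pow_le_aeval (p : ℕ[X]) {x : ℝ} (hx : 0 ≤ x) (b : ℕ) :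
    (p.coeff b : ℝ) * x ^ b ≤ aeval x p := by
  rw [aeval_eq_sum_range' (Nat.lt_succ_of_le (Nat.le_add_right p.natDegree b)) x, ← nsmul_eq_mul]
  exact single_le_sum (f := fun i => p.coeff i • x ^ i) (fun i _ => by positivity)
    (mem_range.2 (by omega : b < p.natDegree + b + 1))

namespace LaurentPolynomial

section Semiring

variable {R : Type*} [Semiring R] {p q : R[T;T⁻¹]} {a b : ℤ}

theorem coeff_mul_add_of_forall_le (hp : ∀ i ∈ p.coeff.support, i ≤ a)
    (hq : ∀ j ∈ q.coeff.support, j ≤ b) : (p * q).coeff (a + b) = p.coeff a * q.coeff b :=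
  AddMonoidAlgebra.coeff_mul_add_of_uniqueAdd fun i j hi hj _ => by
    have := hp i hi; have := hq j hj; omega

theorem coeff_mul_add_of_forall_ge (hp : ∀ i ∈ p.coeff.support, a ≤ i)
    (hq : ∀ j ∈ q.coeff.support, b ≤ j) : (p * q).coeff (a + b) = p.coeff a * q.coeff b :=
  AddMonoidAlgebra.coeff_mul_add_of_uniqueAdd fun i j hi hj _ => by
    have := hp i hi; have := hq j hj; omega

theorem add_le_of_mem_support_mul (hp : ∀ i ∈ p.coeff.support, a ≤ i)
    (hq : ∀ j ∈ q.coeff.support, b ≤ j) {k : ℤ} (hk : k ∈ (p * q).coeff.support) :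
    a + b ≤ k := by
  obtain ⟨i, hi, j, hj, rfl⟩ := mem_add.1 (AddMonoidAlgebra.support_coeff_mul_subset p q hk)
  exact add_le_add (hp i hi) (hq j hj)

theorem coeff_toLaurent_natCast (f : R[X]) (k : ℕ) : (toLaurent f).coeff k = f.coeff k := by
  rw [coeff_toLaurent]
  exact Finsupp.mapDomain_apply (Nat.castEmbedding (R := ℤ)).injective _ k

theorem nonneg_of_mem_support_toLaurent {f : R[X]} {k : ℤ}
    (hk : k ∈ (toLaurent f).coeff.support) : 0 ≤ k := by
  rw [support_coeff_toLaurent] at hk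
  obtain ⟨i, -, rfl⟩ := mem_map.1 hk
  exact Int.natCast_nonneg i

theorem le_natDegree_of_mem_support_toLaurent {f : R[X]} {k : ℤ}
    (hk : k ∈ (toLaurent f).coeff.support) : k ≤ f.natDegree := by
  rw [support_coeff_toLaurent] at hk
  obtain ⟨i, hi, rfl⟩ := mem_map.1 hk
  exact Int.ofNat_le.2 (le_natDegree_of_mem_supp i hi)

theorem coeff_toLaurent_of_neg (f : R[X]) {k : ℤ} (hk : k < 0) : (toLaurent f).coeff k = 0 :=
  Finsupp.notMem_support_iff.1 fun h => (nonneg_of_mem_support_toLaurent h).not_gt hk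

theorem le_of_mem_support_toLaurent_X_pow_mul {K : ℕ} {W : R[X]} {k : ℤ}
    (hk : k ∈ (toLaurent (X ^ K * W)).coeff.support) : K ≤ k := by
  rw [map_mul, toLaurent_X_pow] at hk
  simpa using add_le_of_mem_support_mul
    (fun i hi => (mem_singleton.1 (Finsupp.support_single_subset hi)).ge)
    (fun _ => nonneg_of_mem_support_toLaurent) hk

theorem support_subset_of_toLaurent_mul [NoZeroDivisors R] {U : R[X]} (hU : U.coeff 0 ≠ 0)
    {f : R[T;T⁻¹]} {S : Set ℤ} (hS : S.OrdConnected)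
    (h : ↑(toLaurent U * f).coeff.support ⊆ S) : ↑f.coeff.support ⊆ S := by
  intro j hj
  have hne : f.coeff.support.Nonempty := ⟨j, hj⟩
  have hlo : (0 : ℤ) + f.coeff.support.min' hne ∈ S := by
    refine h (Finsupp.mem_support_iff.2 ?_)
    rw [coeff_mul_add_of_forall_ge (fun _ => nonneg_of_mem_support_toLaurent)
      (fun i hi => f.coeff.support.min'_le i hi)]
    exact mul_ne_zero (by rwa [← Nat.cast_zero, coeff_toLaurent_natCast])
      (Finsupp.mem_support_iff.1 (f.coeff.support.min'_mem hne))
  have hhi : (U.natDegree : ℤ) + f.coeff.support.max' hne ∈ S := by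
    refine h (Finsupp.mem_support_iff.2 ?_)
    rw [coeff_mul_add_of_forall_le (fun _ => le_natDegree_of_mem_support_toLaurent)
      (fun i hi => f.coeff.support.le_max' i hi), coeff_toLaurent_natCast]
    exact mul_ne_zero (leadingCoeff_ne_zero.2 fun h0 => hU (by simp [h0]))
      (Finsupp.mem_support_iff.1 (f.coeff.support.max'_mem hne))
  refine hS.out hlo hhi ⟨?_, ?_⟩
  · simpa using f.coeff.support.min'_le j hj
  · have := f.coeff.support.le_max' j hj
    omega

end Semiring

theorem coeff_toLaurent_mul_mul_toLaurent {R : Type*} [CommRing R] {U V : R[X]} {K : ℕ}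
    (hUV : X ^ K ∣ U * V - 1) {f : R[T;T⁻¹]} {lo d : ℤ}
    (hf : ∀ j ∈ f.coeff.support, lo ≤ j) (hd : d < lo + K) :
    (toLaurent U * f * toLaurent V).coeff d = f.coeff d := by
  obtain ⟨W, hW⟩ := hUV
  have hsplit : toLaurent U * f * toLaurent V = f + f * toLaurent (X ^ K * W) := by
    rw [← hW, map_sub, map_mul, map_one]; ring
  have hzero : (f * toLaurent (X ^ K * W)).coeff d = 0 :=
    Finsupp.notMem_support_iff.1 fun hmem =>
      (add_le_of_mem_support_mul hf (fun _ => le_of_mem_support_toLaurent_X_pow_mul) hmem).not_gt hd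
  rw [hsplit, AddMonoidAlgebra.coeff_add, Finsupp.add_apply, hzero, add_zero]

def l1Norm (p : ℤ[T;T⁻¹]) : ℝ := ∑ j ∈ p.coeff.support, |(p.coeff j : ℝ)|

theorem l1Norm_nonneg (p : ℤ[T;T⁻¹]) : 0 ≤ l1Norm p :=
  sum_nonneg fun _ _ => abs_nonneg _

theorem abs_coeff_mul_le (p q : ℤ[T;T⁻¹]) (d : ℤ) {E : ℝ}
    (hq : ∀ a ∈ p.coeff.support, |(q.coeff (d - a) : ℝ)| ≤ E) :
    |((p * q).coeff d : ℝ)| ≤ l1Norm p * E := by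
  rw [AddMonoidAlgebra.coeff_mul_apply_left, Finsupp.sum, Int.cast_sum, l1Norm, sum_mul]
  refine (abs_sum_le_sum_abs _ _).trans (sum_le_sum fun a ha => ?_)
  rw [Int.cast_mul, abs_mul, neg_add_eq_sub]
  exact mul_le_mul_of_nonneg_left (hq a ha) (abs_nonneg _)

theorem l1Norm_le_of_support_subset_Icc {p : ℤ[T;T⁻¹]} {N : ℕ} {E : ℝ} (hE : 0 ≤ E)
    (hsupp : ↑p.coeff.support ⊆ Set.Icc (-(N : ℤ)) N)
    (hcoeff : ∀ j ∈ p.coeff.support, |(p.coeff j : ℝ)| ≤ E) :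
    l1Norm p ≤ (2 * N + 1) * E := by
  have hcard : #p.coeff.support ≤ 2 * N + 1 := by
    calc #p.coeff.support ≤ #(Icc (-(N : ℤ)) N) :=
          card_le_card fun j hj => Finset.mem_Icc.2 (hsupp hj)
      _ = 2 * N + 1 := by rw [Int.card_Icc]; omega
  calc l1Norm p ≤ #p.coeff.support • E := sum_le_card_nsmul _ _ _ hcoeff
    _ ≤ (2 * N + 1) * E := by
      rw [nsmul_eq_mul]
      exact mul_le_mul_of_nonneg_right (by exact_mod_cast hcard) hE

end LaurentPolynomial

theorem div_two_le_one_sub_exp_neg {t : ℝ} (h0 : 0 ≤ t) (h1 : t ≤ 1) :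
    t / 2 ≤ 1 - exp (-t) := by
  have hexp : exp (-t) * (t + 1) ≤ 1 :=
    calc exp (-t) * (t + 1) ≤ exp (-t) * exp t := by gcongr; exact add_one_le_exp t
      _ = 1 := by rw [← exp_add, neg_add_cancel, exp_zero]
  nlinarith [exp_pos (-t)]

theorem exp_neg_one_div_lt_one {n : ℕ} (hn : 0 < n) : exp (-1 / n) < 1 :=
  exp_lt_one_iff.2 (div_neg_of_neg_of_pos (by norm_num) (by exact_mod_cast hn))

theorem prod_inv_one_sub_exp_neg_one_div_pow_le {n : ℕ} (hn : 0 < n) :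
    ∏ j ∈ range n, (1 - exp (-1 / n) ^ (j + 1))⁻¹ ≤ (2 * exp 1) ^ n := by
  have hn' : (0 : ℝ) < n := by exact_mod_cast hn
  have hterm : ∀ j ∈ range n, (1 - exp (-1 / n) ^ (j + 1))⁻¹ ≤ 2 * n / (j + 1) := by
    intro j hj
    have hj' : ((j : ℝ) + 1) / n ≤ 1 := by
      rw [div_le_one hn']; exact_mod_cast mem_range.1 hj
    rw [← exp_nat_mul, show ((j + 1 : ℕ) : ℝ) * (-1 / n) = -((j + 1) / n) by push_cast; ring]
    calc (1 - exp (-((j + 1) / n)))⁻¹ ≤ (((j : ℝ) + 1) / n / 2)⁻¹ :=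
          inv_anti₀ (by positivity) (div_two_le_one_sub_exp_neg (by positivity) hj')
      _ = 2 * n / (j + 1) := by field_simp
  calc ∏ j ∈ range n, (1 - exp (-1 / n) ^ (j + 1))⁻¹
      ≤ ∏ j ∈ range n, (2 * n / (j + 1) : ℝ) :=
        prod_le_prod (fun j _ => inv_nonneg.2 (sub_nonneg.2
          (pow_le_one₀ (exp_pos _).le (exp_neg_one_div_lt_one hn).le))) hterm
    _ = 2 ^ n * ((n : ℝ) ^ n / n.factorial) := by
        rw [prod_div_distrib, prod_const, card_range, mul_pow, mul_div_assoc]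
        congr 2
        exact_mod_cast prod_range_add_one_eq_factorial n
    _ ≤ (2 * exp 1) ^ n := by
        rw [mul_pow, ← exp_nat_mul, mul_one]
        gcongr
        exact pow_div_factorial_le_exp _ (Nat.cast_nonneg n) n

theorem mem_Icc_natFloor_of_abs_le {j : ℤ} {r : ℝ} (h : |(j : ℝ)| ≤ r) :
    j ∈ Set.Icc (-(⌊r⌋₊ : ℤ)) ⌊r⌋₊ := by
  have : j.natAbs ≤ ⌊r⌋₊ := Nat.le_floor (by rwa [Nat.cast_natAbs, Int.cast_abs])
  constructor <;> omega

theorem two_mul_add_one_mul_exp_le_pow {C C' G : ℝ} {n N : ℕ} (hC' : 0 ≤ C') (hG : 0 ≤ G)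
    (hGC : G ≤ C ^ n) (hn : 1 ≤ n) (hN : (N : ℝ) ≤ C' * n ^ 2) :
    (2 * N + 1) * (G * (exp (2 * N / n) * (2 * exp 1) ^ n)) ≤
      (8 * (2 * C' + 1) * C * exp (2 * C' + 1)) ^ n := by
  have hn' : (1 : ℝ) ≤ n := by exact_mod_cast hn
  have hsq : (n : ℝ) ^ 2 ≤ 4 ^ n :=
    calc (n : ℝ) ^ 2 ≤ (2 ^ n) ^ 2 := by gcongr; exact_mod_cast Nat.lt_two_pow_self.le
      _ = 4 ^ n := by rw [← pow_mul, mul_comm, pow_mul]; norm_num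
  have hcard : (2 * N + 1 : ℝ) ≤ (2 * C' + 1) ^ n * 4 ^ n :=
    calc (2 * N + 1 : ℝ) ≤ (2 * C' + 1) * n ^ 2 := by nlinarith
      _ ≤ (2 * C' + 1) ^ n * 4 ^ n :=
        mul_le_mul (le_self_pow₀ (by linarith) (by omega)) hsq (by positivity) (by positivity)
  have hexp : exp (2 * N / n) ≤ exp (2 * C') ^ n := by
    rw [← exp_nat_mul, exp_le_exp, div_le_iff₀ (by positivity)]
    nlinarith
  calc (2 * N + 1) * (G * (exp (2 * N / n) * (2 * exp 1) ^ n))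
      ≤ ((2 * C' + 1) ^ n * 4 ^ n) * (C ^ n * (exp (2 * C') ^ n * (2 * exp 1) ^ n)) :=
        mul_le_mul hcard (mul_le_mul hGC (by gcongr) (by positivity) (hG.trans hGC))
          (by positivity) (by positivity)
    _ = (8 * (2 * C' + 1) * C * exp (2 * C' + 1)) ^ n := by
        rw [exp_add, show (8 : ℝ) = 4 * 2 by norm_num]; simp only [mul_pow]; ring

noncomputable def qPochhammerPoly (R : Type*) [CommRing R] (n : ℕ) : R[X] :=
  ∏ j ∈ range n, (1 - X ^ (j + 1))

theorem coeff_zero_qPochhammerPoly (R : Type*) [CommRing R] (n : ℕ) :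
    (qPochhammerPoly R n).coeff 0 = 1 := by
  simp [qPochhammerPoly, coeff_zero_eq_eval_zero, eval_prod]

theorem qPochhammer'_eq_toLaurent (n : ℕ) :
    qPochhammer' n = toLaurent (qPochhammerPoly ℤ n) := by
  simp [qPochhammer', qPochhammerPoly, map_prod]

/-- `∏_{j ≤ n} ∑_{m < K} X^{jm}`, the product of the geometric series of the factors of
`1/(q)_n`, each cut off after `K` terms. -/
noncomputable def truncInvQPochhammer (R : Type*) [CommSemiring R] (n K : ℕ) : R[X] :=
  ∏ j ∈ range n, ∑ m ∈ range K, (X ^ (j + 1)) ^ m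

theorem qPochhammerPoly_mul_truncInvQPochhammer (R : Type*) [CommRing R] (n K : ℕ) :
    qPochhammerPoly R n * truncInvQPochhammer R n K =
      ∏ j ∈ range n, (1 - (X ^ (j + 1)) ^ K) := by
  rw [qPochhammerPoly, truncInvQPochhammer, ← prod_mul_distrib]
  exact prod_congr rfl fun j _ => by rw [mul_comm, geom_sum_mul_neg]

theorem X_pow_dvd_qPochhammerPoly_mul_truncInvQPochhammer_sub_one (R : Type*) [CommRing R]
    (n K : ℕ) : (X ^ K : R[X]) ∣ qPochhammerPoly R n * truncInvQPochhammer R n K - 1 := by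
  rw [qPochhammerPoly_mul_truncInvQPochhammer]
  exact dvd_prod_one_sub_sub_one fun j _ => by
    rw [← pow_mul]; exact pow_dvd_pow X (Nat.le_mul_of_pos_left K j.succ_pos)

theorem map_truncInvQPochhammer {R S : Type*} [CommSemiring R] [CommSemiring S] (φ : R →+* S)
    (n K : ℕ) : (truncInvQPochhammer R n K).map φ = truncInvQPochhammer S n K := by
  simp [truncInvQPochhammer, Polynomial.map_prod, Polynomial.map_sum]

theorem aeval_truncInvQPochhammer_le {x : ℝ} (hx0 : 0 ≤ x) (hx1 : x < 1) (n K : ℕ) :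
    aeval x (truncInvQPochhammer ℕ n K) ≤ ∏ j ∈ range n, (1 - x ^ (j + 1))⁻¹ := by
  simp only [truncInvQPochhammer, map_prod, map_sum, map_pow, aeval_X]
  refine prod_le_prod (fun j _ => by positivity) fun j _ => ?_
  simpa [← range_eq_Ico, div_eq_inv_mul] using geom_sum_Ico_le_of_lt_one (m := 0) (n := K)
    (pow_nonneg hx0 (j + 1)) (pow_lt_one₀ hx0 hx1 j.succ_ne_zero)

theorem abs_coeff_toLaurent_truncInvQPochhammer_le {x : ℝ} (hx0 : 0 < x) (hx1 : x < 1)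
    (n K B : ℕ) {b : ℤ} (hb : b ≤ B) :
    |((toLaurent (truncInvQPochhammer ℤ n K)).coeff b : ℝ)| ≤
      (x ^ B)⁻¹ * ∏ j ∈ range n, (1 - x ^ (j + 1))⁻¹ := by
  have hprod : 0 ≤ ∏ j ∈ range n, (1 - x ^ (j + 1))⁻¹ := prod_nonneg fun j _ =>
    inv_nonneg.2 (sub_nonneg.2 (pow_le_one₀ hx0.le hx1.le))
  obtain ⟨m, rfl⟩ | hneg := (le_or_gt 0 b).imp Int.eq_ofNat_of_zero_le id
  · rw [coeff_toLaurent_natCast, ← map_truncInvQPochhammer (Nat.castRingHom ℤ), coeff_map,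
      eq_natCast, Int.cast_natCast, Nat.abs_cast]
    have hmB : m ≤ B := by exact_mod_cast hb
    calc ((truncInvQPochhammer ℕ n K).coeff m : ℝ)
        ≤ (x ^ m)⁻¹ * aeval x (truncInvQPochhammer ℕ n K) := by
          rw [le_inv_mul_iff₀ (by positivity), mul_comm]
          exact coeff_mul_pow_le_aeval _ hx0.le m
      _ ≤ (x ^ B)⁻¹ * ∏ j ∈ range n, (1 - x ^ (j + 1))⁻¹ :=
          mul_le_mul (inv_anti₀ (by positivity) (pow_le_pow_of_le_one hx0.le hx1.le hmB))
            (aeval_truncInvQPochhammer_le hx0.le hx1 n K)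
            (le_trans (by positivity) (coeff_mul_pow_le_aeval _ hx0.le 0)) (by positivity)
  · rw [coeff_toLaurent_of_neg _ hneg, Int.cast_zero, abs_zero]
    positivity

theorem support_subset_of_qPochhammer'_mul {n : ℕ} {f : ℤ[T;T⁻¹]} {S : Set ℤ}
    (hS : S.OrdConnected) (h : ↑(qPochhammer' n * f).coeff.support ⊆ S) :
    ↑f.coeff.support ⊆ S := by
  rw [qPochhammer'_eq_toLaurent] at h
  exact support_subset_of_toLaurent_mul (by simp [coeff_zero_qPochhammerPoly]) hS h

theorem l1Norm_le_of_qPochhammer'_mul {n N : ℕ} (hn : 0 < n) (f : ℤ[T;T⁻¹])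
    (hg : ↑(qPochhammer' n * f).coeff.support ⊆ Set.Icc (-(N : ℤ)) N) :
    l1Norm f ≤
      (2 * N + 1) * (l1Norm (qPochhammer' n * f) * (exp (2 * N / n) * (2 * exp 1) ^ n)) := by
  set P := toLaurent (truncInvQPochhammer ℤ n (2 * N + 1))
  have hf := support_subset_of_qPochhammer'_mul Set.ordConnected_Icc hg
  have hfg : ∀ d ∈ Set.Icc (-(N : ℤ)) N, f.coeff d = (qPochhammer' n * f * P).coeff d := by
    rintro d ⟨-, hd⟩
    rw [qPochhammer'_eq_toLaurent]
    refine (coeff_toLaurent_mul_mul_toLaurent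
      (X_pow_dvd_qPochhammerPoly_mul_truncInvQPochhammer_sub_one ℤ n _) (lo := -N)
      (fun j hj => (hf hj).1) ?_).symm
    push_cast; omega
  have hP : ∀ b : ℤ, b ≤ (2 * N : ℕ) →
      |(P.coeff b : ℝ)| ≤ exp (2 * N / n) * (2 * exp 1) ^ n := by
    intro b hb
    refine (abs_coeff_toLaurent_truncInvQPochhammer_le (exp_pos _)
      (exp_neg_one_div_lt_one hn) n _ _ hb).trans ?_
    rw [← exp_nat_mul, ← exp_neg,
      show -((2 * N : ℕ) * (-1 / n) : ℝ) = 2 * N / n by push_cast; ring]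
    exact mul_le_mul_of_nonneg_left (prod_inv_one_sub_exp_neg_one_div_pow_le hn) (exp_pos _).le
  refine l1Norm_le_of_support_subset_Icc (mul_nonneg (l1Norm_nonneg _) (by positivity)) hf
    fun d hd => ?_
  rw [hfg d (hf hd)]
  refine abs_coeff_mul_le _ P d fun a ha => hP _ ?_
  have := hg ha; have := hf hd; simp only [Set.mem_Icc] at *; push_cast; omega

/-- (Boyd) If `((q)_n·f_n(q))` is nicely bounded, then `(f_n(q))` is nicely bounded. -/
theorem nicelyBounded_of_qPochhammer_mul (f : ℕ → LaurentPolynomial ℤ)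
    (h : NicelyBounded (fun n => qPochhammer' n * f n)) :
    NicelyBounded f := by
  obtain ⟨C, C', hC, hC', hg⟩ := h
  refine ⟨8 * (2 * C' + 1) * C * exp (2 * C' + 1), C', by positivity, hC', fun n hn => ?_⟩
  obtain ⟨hgsupp, hgl1⟩ := hg n hn
  have hsupp := support_subset_of_qPochhammer'_mul
    (Set.ordConnected_Icc.preimage_mono Int.cast_mono) fun j hj => abs_le.1 (hgsupp j hj)
  refine ⟨fun j hj => abs_le.2 (hsupp hj), ?_⟩
  have hgN := fun j hj => mem_Icc_natFloor_of_abs_le (hgsupp j hj)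
  exact (l1Norm_le_of_qPochhammer'_mul hn (f n) hgN).trans
    (two_mul_add_one_mul_exp_le_pow hC'.le (l1Norm_nonneg _) hgl1 hn (Nat.floor_le (by positivity)))
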